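/- The entropy of softmax(x/α) is nondecreasing in the temperature α > 0: if 0 < α₁ ≤ α₂ then H(softmax(x/α₁)) ≤ H(softmax(x/α₂)). -/

import Mathlib

/-!
Write `p_β = softmax (β x)`, `L β = log ∑ exp (β xᵢ)` and `E β = ∑ p_β i * xᵢ`, so that
`H (p_β) = L β - β E β`. Gibbs' inequality `H (p_β) ≤ -∑ p_β i * log (p_β' i) = L β' - β' E β`
says that `E β` is a subgradient of `L` at `β`. Subgradients of a function on the line increase,
and then `L β - β E β` decreases in `β ≥ 0`; the temperature is `α = β⁻¹`.
-/

open Finset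

noncomputable def softmax {d : ℕ} (x : Fin d → ℝ) : Fin d → ℝ :=
  fun j => Real.exp (x j) / ∑ i, Real.exp (x i)

noncomputable def shannonEntropy {d : ℕ} (y : Fin d → ℝ) : ℝ :=
  -∑ i, y i * Real.log (y i)

lemma monotone_of_forall_add_sub_mul_le {L E : ℝ → ℝ}
    (hsub : ∀ b b', L b + (b' - b) * E b ≤ L b') : Monotone E := by
  intro b₁ b₂ hb
  rcases hb.eq_or_lt with rfl | hlt
  · rfl
  · nlinarith [hsub b₁ b₂, hsub b₂ b₁]

lemma antitoneOn_sub_mul_of_forall_add_sub_mul_le {L E : ℝ → ℝ}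
    (hsub : ∀ b b', L b + (b' - b) * E b ≤ L b') :
    AntitoneOn (fun b => L b - b * E b) (Set.Ici 0) := by
  intro b₁ (hb₁ : 0 ≤ b₁) b₂ _ hb
  have hE : E b₁ ≤ E b₂ := monotone_of_forall_add_sub_mul_le hsub hb
  nlinarith [hsub b₂ b₁, mul_le_mul_of_nonneg_left hE hb₁]

lemma mul_log_sub_mul_log_le {p q : ℝ} (hq : 0 ≤ q) (hp : 0 < p) :
    q * Real.log p - q * Real.log q ≤ p - q := by
  rcases hq.eq_or_lt with rfl | hq
  · simpa using hp.le
  · calc q * Real.log p - q * Real.log q = q * Real.log (p / q) := by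
          rw [Real.log_div hp.ne' hq.ne']; ring
      _ ≤ q * (p / q - 1) :=
          mul_le_mul_of_nonneg_left (Real.log_le_sub_one_of_pos (by positivity)) hq.le
      _ = p - q := by field_simp

lemma sum_mul_log_le_sum_mul_log {ι : Type*} [Fintype ι] {p q : ι → ℝ} (hq : ∀ i, 0 ≤ q i)
    (hp : ∀ i, 0 < p i) (hsum : ∑ i, p i ≤ ∑ i, q i) :
    ∑ i, q i * Real.log (p i) ≤ ∑ i, q i * Real.log (q i) := by
  have := Finset.sum_le_sum fun i (_ : i ∈ univ) => mul_log_sub_mul_log_le (hq i) (hp i)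
  rw [Finset.sum_sub_distrib, Finset.sum_sub_distrib] at this
  linarith

section softmax

variable {d : ℕ}

lemma sum_exp_pos (z : Fin d → ℝ) (j : Fin d) : 0 < ∑ i, Real.exp (z i) :=
  Finset.sum_pos (fun i _ => Real.exp_pos (z i)) ⟨j, mem_univ j⟩

lemma softmax_pos (z : Fin d → ℝ) (j : Fin d) : 0 < softmax z j :=
  div_pos (Real.exp_pos _) (sum_exp_pos z j)

lemma sum_softmax [NeZero d] (z : Fin d → ℝ) : ∑ i, softmax z i = 1 := by
  simp only [softmax, ← Finset.sum_div, div_self (sum_exp_pos z 0).ne']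

lemma log_softmax (z : Fin d → ℝ) (j : Fin d) :
    Real.log (softmax z j) = z j - Real.log (∑ i, Real.exp (z i)) := by
  rw [softmax, Real.log_div (Real.exp_pos _).ne' (sum_exp_pos z j).ne', Real.log_exp]

lemma neg_sum_mul_log_softmax (q z : Fin d → ℝ) (hq : ∑ i, q i = 1) :
    -∑ i, q i * Real.log (softmax z i) = Real.log (∑ i, Real.exp (z i)) - ∑ i, q i * z i := by
  simp only [log_softmax, mul_sub, Finset.sum_sub_distrib, ← Finset.sum_mul, hq]
  ring

lemma shannonEntropy_le_neg_sum_mul_log_softmax [NeZero d] (q z : Fin d → ℝ)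
    (hq₀ : ∀ i, 0 ≤ q i) (hq : ∑ i, q i = 1) :
    shannonEntropy q ≤ -∑ i, q i * Real.log (softmax z i) :=
  neg_le_neg (sum_mul_log_le_sum_mul_log hq₀ (softmax_pos z) (by rw [sum_softmax, hq]))

noncomputable def logPartition (x : Fin d → ℝ) (β : ℝ) : ℝ :=
  Real.log (∑ i, Real.exp (β * x i))

noncomputable def gibbsMean (x : Fin d → ℝ) (β : ℝ) : ℝ :=
  ∑ i, softmax (fun j => β * x j) i * x i

lemma neg_sum_mul_log_softmax_mul (q x : Fin d → ℝ) (hq : ∑ i, q i = 1) (β : ℝ) :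
    -∑ i, q i * Real.log (softmax (fun j => β * x j) i)
      = logPartition x β - β * ∑ i, q i * x i := by
  rw [neg_sum_mul_log_softmax q _ hq, logPartition, Finset.mul_sum]
  simp only [mul_left_comm]

lemma shannonEntropy_softmax_mul [NeZero d] (x : Fin d → ℝ) (β : ℝ) :
    shannonEntropy (softmax (fun j => β * x j)) = logPartition x β - β * gibbsMean x β :=
  neg_sum_mul_log_softmax_mul _ x (sum_softmax _) β

lemma logPartition_add_sub_mul_gibbsMean_le [NeZero d] (x : Fin d → ℝ) (β β' : ℝ) :
    logPartition x β + (β' - β) * gibbsMean x β ≤ logPartition x β' := by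
  have gibbs := shannonEntropy_le_neg_sum_mul_log_softmax (softmax fun j => β * x j)
    (fun j => β' * x j) (fun i => (softmax_pos _ i).le) (sum_softmax _)
  rw [shannonEntropy_softmax_mul, neg_sum_mul_log_softmax_mul _ x (sum_softmax _)] at gibbs
  rw [gibbsMean] at gibbs ⊢
  linarith [sub_mul β' β (∑ i, softmax (fun j => β * x j) i * x i)]

end softmax

/-- The entropy of softmax(x/α) is nondecreasing in the temperature α > 0. -/
theorem entropy_softmax_monotone_temperature {d : ℕ} (x : Fin d → ℝ)
    (α₁ α₂ : ℝ) (h1 : 0 < α₁) (h12 : α₁ ≤ α₂) :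
    shannonEntropy (softmax (fun j => x j / α₁))
      ≤ shannonEntropy (softmax (fun j => x j / α₂)) := by
  rcases d.eq_zero_or_pos with rfl | hd
  · simp [shannonEntropy]
  have := NeZero.of_pos hd
  have h2 : 0 < α₂ := h1.trans_le h12
  simp only [div_eq_inv_mul, shannonEntropy_softmax_mul]
  exact antitoneOn_sub_mul_of_forall_add_sub_mul_le (logPartition_add_sub_mul_gibbsMean_le x)
    (inv_pos.2 h2).le (inv_pos.2 h1).le (inv_anti₀ h1 h12)
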